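/- Let f be the n×n block diagonal matrix diag(σ, τ) where σ ∈ S_k is a k×k permutation matrix and τ is an (n-k)×(n-k) nilpotent matrix. Then the stabilizer of f under the conjugation action of S_n (acting by permutation matrices) is the direct product Z(σ) × Stab_{S_{n-k}}(τ), where Z(σ) is the centralizer of σ in S_k and Stab_{S_{n-k}}(τ) is the subgroup of permutation matrices in S_{n-k} commuting with τ. -/

import Mathlib

/-- The 0–1 matrix (over `ℚ`) of a permutation `σ`. -/
def permMatrixQ {β : Type*} [DecidableEq β] (σ : Equiv.Perm β) : Matrix β β ℚ :=
  fun i j => if σ i = j then 1 else 0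

/-!
A permutation `π` stabilizing `diag(A, D)` stabilizes all its powers. If `A` has finite order and
`D` is nilpotent, some power is `diag(1, 0)`, whose diagonal tells the two blocks apart, so `π`
preserves them and is a sum `a ⊕ b` of stabilizers of `A` and of `D`. For `A` the matrix of `σ`,
stabilizing `A` under `a` means that `a` commutes with `σ`.
-/

open Equiv Set

namespace Matrix

variable {l m n R : Type*}

theorem submatrix_pow_equiv [Fintype n] [DecidableEq n] [Semiring R] (M : Matrix n n R)
    (e : Perm n) (k : ℕ) : (M ^ k).submatrix e e = M.submatrix e e ^ k :=
  map_pow (reindexRingEquiv R e.symm) M k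

theorem fromBlocks_submatrix_sumCongr {l' m' n' o' o α : Type*} (A : Matrix n l α)
    (B : Matrix n m α) (C : Matrix o l α) (D : Matrix o m α) (e₁ : n' ≃ n) (e₂ : o' ≃ o)
    (e₃ : l' ≃ l) (e₄ : m' ≃ m) :
    (fromBlocks A B C D).submatrix (sumCongr e₁ e₂) (sumCongr e₃ e₄) =
      fromBlocks (A.submatrix e₁ e₃) (B.submatrix e₁ e₄) (C.submatrix e₂ e₃)
        (D.submatrix e₂ e₄) := by
  ext (i | i) (j | j) <;> rfl

theorem exists_fromBlocks_pow_eq_fromBlocks_one_zero [Fintype m] [Fintype n] [DecidableEq m]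
    [DecidableEq n] [Semiring R] {A : Matrix m m R} {D : Matrix n n R}
    (hA : IsOfFinOrder A) (hD : IsNilpotent D) :
    ∃ k : ℕ, fromBlocks A 0 0 D ^ k = fromBlocks 1 0 0 0 := by
  obtain ⟨p, hp, hAp⟩ := hA.exists_pow_eq_one
  obtain ⟨q, hDq⟩ := hD
  refine ⟨p * q, ?_⟩
  rw [fromBlocks_diagonal_pow, pow_mul, hAp, one_pow,
    pow_eq_zero_of_le (Nat.le_mul_of_pos_left q hp) hDq]

theorem mapsTo_inl_of_submatrix_fromBlocks_one_zero [DecidableEq m] [Semiring R] [Nontrivial R]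
    {π : Perm (m ⊕ n)}
    (h : (fromBlocks (1 : Matrix m m R) 0 0 0).submatrix π π = fromBlocks 1 0 0 0) :
    MapsTo π (range Sum.inl) (range Sum.inl) := by
  rintro _ ⟨i, rfl⟩
  have hii := congrFun (congrFun h (Sum.inl i)) (Sum.inl i)
  rcases hπ : π (Sum.inl i) with j | j
  · exact ⟨j, rfl⟩
  · simp [hπ] at hii

theorem submatrix_fromBlocks_eq_iff [Fintype m] [Fintype n] [DecidableEq m] [DecidableEq n]
    [Semiring R] [Nontrivial R] {A : Matrix m m R} {D : Matrix n n R} (hA : IsOfFinOrder A)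
    (hD : IsNilpotent D) (π : Perm (m ⊕ n)) :
    (fromBlocks A 0 0 D).submatrix π π = fromBlocks A 0 0 D ↔
      ∃ (a : Perm m) (b : Perm n),
        A.submatrix a a = A ∧ D.submatrix b b = D ∧ π = sumCongr a b := by
  constructor
  · intro h
    obtain ⟨k, hk⟩ := exists_fromBlocks_pow_eq_fromBlocks_one_zero hA hD
    have hπ : (fromBlocks (1 : Matrix m m R) 0 0 0).submatrix π π = fromBlocks 1 0 0 0 := by
      rw [← hk, submatrix_pow_equiv, h]
    obtain ⟨⟨a, b⟩, rfl⟩ := Perm.mem_sumCongrHom_range_of_perm_mapsTo_inl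
      (mapsTo_inl_of_submatrix_fromBlocks_one_zero hπ)
    rw [Perm.sumCongrHom_apply, fromBlocks_submatrix_sumCongr, fromBlocks_inj] at h
    exact ⟨a, b, h.1, h.2.2.2, rfl⟩
  · rintro ⟨a, b, ha, hb, rfl⟩
    rw [fromBlocks_submatrix_sumCongr, ha, hb]
    rfl

end Matrix

section permMatrixQ

variable {β : Type*} [DecidableEq β]

theorem permMatrixQ_injective : Function.Injective (permMatrixQ (β := β)) := by
  intro σ σ' h
  ext i
  simpa [permMatrixQ] using congrFun (congrFun h i) (σ' i)

theorem permMatrixQ_submatrix (σ a : Perm β) :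
    (permMatrixQ σ).submatrix a a = permMatrixQ (a⁻¹ * σ * a) := by
  ext i j
  simp only [Matrix.submatrix_apply, permMatrixQ, Perm.mul_apply, Perm.inv_eq_iff_eq]

theorem permMatrixQ_submatrix_eq_iff (σ a : Perm β) :
    (permMatrixQ σ).submatrix a a = permMatrixQ σ ↔ a * σ = σ * a := by
  rw [permMatrixQ_submatrix, permMatrixQ_injective.eq_iff, mul_assoc, inv_mul_eq_iff_eq_mul,
    eq_comm]

theorem permMatrixQ_eq_permMatrixHom_inv [Fintype β] (σ : Perm β) :
    permMatrixQ σ = Matrix.permMatrixHom (R := ℚ) σ⁻¹ := by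
  ext i j
  simp [permMatrixQ, PEquiv.toMatrix_apply]

theorem isOfFinOrder_permMatrixQ [Fintype β] (σ : Perm β) : IsOfFinOrder (permMatrixQ σ) := by
  rw [permMatrixQ_eq_permMatrixHom_inv]
  exact MonoidHom.isOfFinOrder _ (isOfFinOrder_of_finite σ⁻¹)

end permMatrixQ

theorem stabilizer_block_diagonal (k l : ℕ) (σ : Equiv.Perm (Fin k))
    (τ : Matrix (Fin l) (Fin l) ℚ) (hτ : IsNilpotent τ)
    (π : Equiv.Perm (Fin k ⊕ Fin l)) :
    (∀ i j, Matrix.fromBlocks (permMatrixQ σ) 0 0 τ (π i) (π j) =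
        Matrix.fromBlocks (permMatrixQ σ) 0 0 τ i j) ↔
      ∃ (a : Equiv.Perm (Fin k)) (b : Equiv.Perm (Fin l)),
        a * σ = σ * a ∧ (∀ i j, τ (b i) (b j) = τ i j) ∧ π = Equiv.sumCongr a b := by
  refine Matrix.ext_iff.trans
    ((Matrix.submatrix_fromBlocks_eq_iff (isOfFinOrder_permMatrixQ σ) hτ π).trans ?_)
  simp_rw [permMatrixQ_submatrix_eq_iff, ← Matrix.ext_iff, Matrix.submatrix_apply]
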